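/- Let A be an n×n integer matrix with determinant ±1 and f_A the induced automorphism of Tⁿ = ℝⁿ/ℤⁿ. Then the set of periodic points of f_A (points x with f_A^k(x) = x for some k ≥ 1) coincides with the set of points of Tⁿ having all coordinates rational (i.e., the image p(ℚⁿ) of rational vectors) if and only if no complex eigenvalue of A is a root of unity. -/

import Mathlib

open Matrix Polynomial
open scoped Classical

noncomputable section

/-- The `n`-torus `ℝⁿ/ℤⁿ`, realized as `Fin n → ℝ/ℤ`. -/
abbrev Torus (n : ℕ) := Fin n → AddCircle (1 : ℝ)

/-- The projection `p : ℝⁿ → Tⁿ`. -/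
def torusProj (n : ℕ) (x : Fin n → ℝ) : Torus n := fun i => (x i : AddCircle (1 : ℝ))

/-- The linear action of an integer matrix on `ℝⁿ`. -/
def realMulVec {n : ℕ} (A : Matrix (Fin n) (Fin n) ℤ) (x : Fin n → ℝ) : Fin n → ℝ :=
  (A.map (Int.cast : ℤ → ℝ)).mulVec x

/-- The complex eigenvalues (with multiplicity) of an integer matrix. -/
def eigsC {n : ℕ} (A : Matrix (Fin n) (Fin n) ℤ) : Multiset ℂ :=
  ((A.map (Int.cast : ℤ → ℂ)).charpoly).roots

/-- A complex number is a root of unity if some positive power of it is `1`. -/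
def IsRootOfUnity (z : ℂ) : Prop := ∃ k : ℕ, 1 ≤ k ∧ z ^ k = 1

/-!
Since `f_A^k ∘ p = p ∘ A^k`, the point `p v` has period `k` iff `(A^k - 1) v ∈ ℤⁿ`, and
`det (A^k - 1) = 0` iff some eigenvalue of `A` is a `k`-th root of unity. If such a `k` exists,
then `(A^k - 1) q = 0` for a nonzero `q ∈ ℚⁿ`, and `p (√2 • q)` is a periodic point that is not
rational. Otherwise `(A^k - 1) v ∈ ℤⁿ` forces `v ∈ ℚⁿ`. Conversely every rational point is
periodic: if `d v ∈ ℤⁿ`, then `A` is invertible modulo `d`, hence `A^k ≡ 1 (mod d)` for some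
`k ≥ 1`, and then `(A^k - 1) v ∈ ℤⁿ`.
-/

open Function

theorem exists_nat_mul_eq_intCast {ι : Type*} [Fintype ι] (q : ι → ℚ) :
    ∃ d : ℕ, d ≠ 0 ∧ ∀ i, ∃ c : ℤ, (d : ℚ) * q i = c := by
  refine ⟨∏ i, (q i).den, Finset.prod_ne_zero_iff.2 fun i _ => (q i).den_nz, fun i => ?_⟩
  obtain ⟨e, he⟩ := Finset.dvd_prod_of_mem (fun i => (q i).den) (Finset.mem_univ i)
  refine ⟨e * (q i).num, ?_⟩
  rw [he]
  push_cast
  rw [← Rat.mul_den_eq_num]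
  ring

namespace Matrix

variable {ι : Type*} [Fintype ι]

theorem map_intCast_mulVec_ratCast (B : Matrix ι ι ℤ) (q : ι → ℚ) :
    B.map (Int.cast : ℤ → ℝ) *ᵥ (fun i => (q i : ℝ)) =
      fun i => ((B.map (Int.cast : ℤ → ℚ) *ᵥ q) i : ℝ) := by
  funext i
  simp [mulVec, dotProduct]

variable [DecidableEq ι]

theorem map_intCast_sub_one {R : Type*} [Ring R] (B : Matrix ι ι ℤ) :
    (B - 1).map (Int.cast : ℤ → R) = B.map Int.cast - 1 := by
  change (Int.castRingHom R).mapMatrix (B - 1) = (Int.castRingHom R).mapMatrix B - 1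
  rw [map_sub, map_one]

theorem det_pow_sub_one_eq_zero_iff {K : Type*} [Field K] [IsAlgClosed K] (M : Matrix ι ι K)
    {k : ℕ} (hk : 0 < k) : (M ^ k - 1).det = 0 ↔ ∃ z ∈ M.charpoly.roots, z ^ k = 1 := by
  have hone : (M ^ k - 1).det = 0 ↔ (1 : K) ∈ spectrum K (M ^ k) := by
    rw [spectrum.mem_iff, map_one, ← IsUnit.neg_iff, neg_sub, isUnit_iff_isUnit_det,
      isUnit_iff_ne_zero, not_not]
  simp only [hone, spectrum.map_pow_of_pos M hk, Set.mem_image, mem_spectrum_iff_isRoot_charpoly,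
    mem_roots M.charpoly_monic.ne_zero]

theorem exists_irrational_mulVec_eq_zero {B : Matrix ι ι ℤ} (hB : B.det = 0) :
    ∃ v : ι → ℝ, B.map (Int.cast : ℤ → ℝ) *ᵥ v = 0 ∧ ∃ i, Irrational (v i) := by
  have hBℚ : (B.map (Int.cast : ℤ → ℚ)).det = 0 := by
    rw [← Int.cast_det, hB, Int.cast_zero]
  obtain ⟨q, hq0, hq⟩ := exists_mulVec_eq_zero_iff.2 hBℚ
  obtain ⟨i, hi⟩ := ne_iff.1 hq0
  refine ⟨Real.sqrt 2 • fun i => (q i : ℝ), ?_, i, ?_⟩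
  · rw [mulVec_smul, map_intCast_mulVec_ratCast, hq]
    funext j
    simp
  · simpa [mul_comm] using irrational_sqrt_two.ratCast_mul hi

theorem exists_ratCast_eq_of_mulVec_eq_intCast {B : Matrix ι ι ℤ} (hB : B.det ≠ 0)
    {v : ι → ℝ} {m : ι → ℤ} (hv : B.map (Int.cast : ℤ → ℝ) *ᵥ v = fun i => (m i : ℝ)) :
    ∃ q : ι → ℚ, v = fun i => (q i : ℝ) := by
  have hunit {R : Type} [Field R] [CharZero R] : IsUnit (B.map (Int.cast : ℤ → R)).det := by
    rw [← Int.cast_det]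
    exact isUnit_iff_ne_zero.2 (Int.cast_ne_zero.2 hB)
  refine ⟨(B.map (Int.cast : ℤ → ℚ))⁻¹ *ᵥ fun i => (m i : ℚ),
    mulVec_injective_of_isUnit ((isUnit_iff_isUnit_det _).2 hunit) ?_⟩
  rw [hv, map_intCast_mulVec_ratCast, mulVec_mulVec, mul_nonsing_inv _ hunit, one_mulVec]
  simp

theorem exists_pow_eq_one_add_smul {A : Matrix ι ι ℤ} (hA : IsUnit A.det) {d : ℕ} (hd : d ≠ 0) :
    ∃ k, 0 < k ∧ ∃ B : Matrix ι ι ℤ, A ^ k = 1 + (d : ℤ) • B := by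
  have : NeZero d := ⟨hd⟩
  let φ := (Int.castRingHom (ZMod d)).mapMatrix (m := ι)
  obtain ⟨u, hu⟩ : IsUnit (φ A) :=
    (isUnit_iff_isUnit_det _).2 (by rw [← RingHom.map_det]; exact hA.map _)
  obtain ⟨k, hk, huk⟩ := (isOfFinOrder_of_finite u).exists_pow_eq_one
  have hφ : φ (A ^ k - 1) = 0 := by
    rw [map_sub, map_pow, ← hu, ← Units.val_pow_eq_pow_val, huk, Units.val_one, map_one, sub_self]
  have hdvd (i j : ι) : (d : ℤ) ∣ (A ^ k - 1) i j :=
    (ZMod.intCast_zmod_eq_zero_iff_dvd _ _).1 (congrFun (congrFun hφ i) j)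
  choose B hB using hdvd
  refine ⟨k, hk, Matrix.of B, ?_⟩
  ext i j
  have := hB i j
  simp only [sub_apply] at this
  simp only [add_apply, smul_apply, of_apply, smul_eq_mul]
  linarith

theorem exists_pow_sub_one_mulVec_ratCast_eq_intCast {A : Matrix ι ι ℤ} (hA : IsUnit A.det)
    (q : ι → ℚ) : ∃ k, 0 < k ∧ ∃ m : ι → ℤ,
      (A ^ k - 1).map (Int.cast : ℤ → ℝ) *ᵥ (fun i => (q i : ℝ)) = fun i => (m i : ℝ) := by
  obtain ⟨d, hd, hdq⟩ := exists_nat_mul_eq_intCast q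
  choose c hc using hdq
  obtain ⟨k, hk, B, hB⟩ := exists_pow_eq_one_add_smul hA hd
  refine ⟨k, hk, B *ᵥ c, ?_⟩
  have hcℝ (j : ι) : (d : ℝ) * q j = c j := by exact_mod_cast hc j
  rw [hB, add_sub_cancel_left]
  funext i
  simp only [mulVec, dotProduct, map_apply, smul_apply, smul_eq_mul, Int.cast_mul,
    Int.cast_natCast, Int.cast_sum, ← hcℝ]
  exact Finset.sum_congr rfl fun j _ => by ring

end Matrix

theorem forall_mem_eigsC_not_isRootOfUnity_iff {n : ℕ} (A : Matrix (Fin n) (Fin n) ℤ) :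
    (∀ z ∈ eigsC A, ¬ IsRootOfUnity z) ↔ ∀ k, 0 < k → (A ^ k - 1).det ≠ 0 := by
  have hsing {k : ℕ} (hk : 0 < k) : (A ^ k - 1).det = 0 ↔ ∃ z ∈ eigsC A, z ^ k = 1 := by
    rw [← (Int.cast_injective (α := ℂ)).eq_iff, Int.cast_zero, ← eq_intCast (Int.castRingHom ℂ),
      RingHom.map_det, map_sub, map_pow, map_one, RingHom.mapMatrix_apply,
      det_pow_sub_one_eq_zero_iff _ hk]
    rfl
  constructor
  · intro h k hk hdet
    obtain ⟨z, hz, hzk⟩ := (hsing hk).1 hdet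
    exact h z hz ⟨k, hk, hzk⟩
  · rintro h z hz ⟨k, hk, hzk⟩
    exact h k hk ((hsing hk).2 ⟨z, hz, hzk⟩)

section Torus

variable {n : ℕ}

theorem torusProj_eq_torusProj_iff {x y : Fin n → ℝ} :
    torusProj n x = torusProj n y ↔ ∃ m : Fin n → ℤ, x - y = fun i => (m i : ℝ) := by
  simp only [torusProj, funext_iff, ← sub_eq_zero (a := ((x _ : ℝ) : AddCircle (1 : ℝ))),
    ← AddCircle.coe_sub, AddCircle.coe_eq_zero_iff, zsmul_one, Pi.sub_apply]
  simp only [eq_comm, Classical.skolem]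

theorem torusProj_surjective : Surjective (torusProj n) := fun x =>
  ⟨fun i => (QuotientAddGroup.mk_surjective (x i)).choose,
    funext fun i => (QuotientAddGroup.mk_surjective (x i)).choose_spec⟩

theorem torusProj_ne_ratCast_of_irrational {v : Fin n → ℝ} {i : Fin n} (hi : Irrational (v i))
    (q : Fin n → ℚ) : torusProj n v ≠ torusProj n fun i => (q i : ℝ) := by
  intro h
  obtain ⟨m, hm⟩ := torusProj_eq_torusProj_iff.1 h
  exact (hi.sub_ratCast (q i)).ne_int (m i) (congrFun hm i)

theorem realMulVec_one (x : Fin n → ℝ) : realMulVec 1 x = x := by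
  simp [realMulVec]

theorem realMulVec_mul (A B : Matrix (Fin n) (Fin n) ℤ) (x : Fin n → ℝ) :
    realMulVec (A * B) x = realMulVec A (realMulVec B x) := by
  simp only [realMulVec, mulVec_mulVec]
  congr 1
  exact Matrix.map_mul (f := Int.castRingHom ℝ)

variable {A : Matrix (Fin n) (Fin n) ℤ} {fA : Torus n → Torus n}

theorem iterate_torusProj (hfA : ∀ x, fA (torusProj n x) = torusProj n (realMulVec A x)) (k : ℕ)
    (x : Fin n → ℝ) : fA^[k] (torusProj n x) = torusProj n (realMulVec (A ^ k) x) := by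
  induction k with
  | zero => rw [iterate_zero_apply, pow_zero, realMulVec_one]
  | succ k ih => rw [iterate_succ_apply', ih, hfA, ← realMulVec_mul, ← pow_succ']

theorem iterate_torusProj_eq_self_iff
    (hfA : ∀ x, fA (torusProj n x) = torusProj n (realMulVec A x)) (k : ℕ) (v : Fin n → ℝ) :
    fA^[k] (torusProj n v) = torusProj n v ↔
      ∃ m : Fin n → ℤ, (A ^ k - 1).map (Int.cast : ℤ → ℝ) *ᵥ v = fun i => (m i : ℝ) := by
  rw [iterate_torusProj hfA, torusProj_eq_torusProj_iff, map_intCast_sub_one, sub_mulVec,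
    one_mulVec]
  rfl

end Torus

/-- The periodic points of `f_A` are exactly the rational points of the torus iff no complex
eigenvalue of `A` is a root of unity. -/
theorem periodic_points_eq_rational_iff {n : ℕ} (A : Matrix (Fin n) (Fin n) ℤ)
    (hAdet : A.det = 1 ∨ A.det = -1)
    (fA : Torus n → Torus n)
    (hfA : ∀ x, fA (torusProj n x) = torusProj n (realMulVec A x)) :
    ({x : Torus n | ∃ k : ℕ, 1 ≤ k ∧ fA^[k] x = x} =
        {x : Torus n | ∃ q : Fin n → ℚ, x = torusProj n fun i => (q i : ℝ)}) ↔
      ∀ z ∈ eigsC A, ¬ IsRootOfUnity z := by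
  rw [forall_mem_eigsC_not_isRootOfUnity_iff]
  constructor
  · intro hEq k hk hdet
    obtain ⟨v, hv, i, hi⟩ := exists_irrational_mulVec_eq_zero hdet
    have hper : torusProj n v ∈ {x : Torus n | ∃ k : ℕ, 1 ≤ k ∧ fA^[k] x = x} :=
      ⟨k, hk, (iterate_torusProj_eq_self_iff hfA k v).2 ⟨0, by rw [hv]; ext; simp⟩⟩
    obtain ⟨q, hq⟩ := hEq ▸ hper
    exact torusProj_ne_ratCast_of_irrational hi q hq
  · intro hdet
    ext x
    obtain ⟨v, rfl⟩ := torusProj_surjective x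
    constructor
    · rintro ⟨k, hk, hv⟩
      obtain ⟨m, hm⟩ := (iterate_torusProj_eq_self_iff hfA k v).1 hv
      obtain ⟨q, rfl⟩ := exists_ratCast_eq_of_mulVec_eq_intCast (hdet k hk) hm
      exact ⟨q, rfl⟩
    · rintro ⟨q, hq⟩
      obtain ⟨k, hk, m, hm⟩ :=
        exists_pow_sub_one_mulVec_ratCast_eq_intCast (Int.isUnit_iff.2 hAdet) q
      exact ⟨k, hk, hq ▸ (iterate_torusProj_eq_self_iff hfA k _).2 ⟨m, hm⟩⟩
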